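/- Let (y, p) : ℝ → ℝ × ℝ be a differentiable solution of the system y'(t) = -p(t)·y(t), p'(t) = y(t)² - y(t) with initial values y(0) = 1 and p(0) = √(1 - 0.02). Then for every t ∈ ℝ, p(t)² ≤ 0.98 and (y(t) - 1)² ≤ 0.98; in particular both |y| and |p| are bounded along the solution. -/

import Mathlib

/-!
The quantity `p² + (y - 1)²`, which is `2H + 1` for the Hamiltonian `H = p²/2 + (y² - 2y)/2`,
has derivative `2p(y² - y) - 2(y - 1)py = 0` along the flow, so it keeps its initial value
`0.98`; each of its two nonnegative summands is then at most `0.98`.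
-/

def morseEnergy (y p : ℝ) : ℝ := p ^ 2 + (y - 1) ^ 2

theorem hasDerivAt_morseEnergy {y p : ℝ → ℝ} {t : ℝ}
    (hy : HasDerivAt y (-p t * y t) t) (hp : HasDerivAt p (y t ^ 2 - y t) t) :
    HasDerivAt (fun s => morseEnergy (y s) (p s)) 0 t := by
  have h : HasDerivAt (fun s => p s ^ 2 + (y s - 1) ^ 2)
      (2 * p t * (y t ^ 2 - y t) + 2 * (y t - 1) * (-p t * y t)) t := by
    simpa using (hp.fun_pow 2).fun_add ((hy.sub_const 1).fun_pow 2)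
  exact h.congr_deriv (by ring)

theorem morseEnergy_eq_of_hasDerivAt {y p : ℝ → ℝ}
    (hy : ∀ t, HasDerivAt y (-p t * y t) t) (hp : ∀ t, HasDerivAt p (y t ^ 2 - y t) t)
    (t s : ℝ) : morseEnergy (y t) (p t) = morseEnergy (y s) (p s) :=
  is_const_of_deriv_eq_zero
    (fun u => (hasDerivAt_morseEnergy (hy u) (hp u)).differentiableAt)
    (fun u => (hasDerivAt_morseEnergy (hy u) (hp u)).deriv) t s

/-- For the transformed Morse system `y' = -p y`, `p' = y² - y` with initial
values `y(0) = 1`, `p(0) = √(1 - 0.02)`, the solution satisfies `p(t)² ≤ 0.98`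
and `(y(t) - 1)² ≤ 0.98` for all `t`; in particular `|y|` and `|p|` are bounded. -/
theorem transformed_morse_solution_bounded
    (y p : ℝ → ℝ) (hy : Differentiable ℝ y) (hp : Differentiable ℝ p)
    (hode : ∀ t : ℝ, deriv y t = -p t * y t ∧ deriv p t = y t ^ 2 - y t)
    (hy0 : y 0 = 1) (hp0 : p 0 = Real.sqrt (1 - 0.02)) :
    ∀ t : ℝ, p t ^ 2 ≤ 0.98 ∧ (y t - 1) ^ 2 ≤ 0.98 := by
  intro t
  have hyDeriv : ∀ s, HasDerivAt y (-p s * y s) s := fun s =>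
    (hode s).1 ▸ (hy s).hasDerivAt
  have hpDeriv : ∀ s, HasDerivAt p (y s ^ 2 - y s) s := fun s =>
    (hode s).2 ▸ (hp s).hasDerivAt
  have hEnergy : p t ^ 2 + (y t - 1) ^ 2 = 0.98 := by
    have h := morseEnergy_eq_of_hasDerivAt hyDeriv hpDeriv t 0
    rw [morseEnergy, morseEnergy, hy0, hp0, Real.sq_sqrt (by norm_num)] at h
    linarith
  exact ⟨by linarith [sq_nonneg (y t - 1)], by linarith [sq_nonneg (p t)]⟩
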